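/- Let G be a graph on [n], 1 ≤ k ≤ ⌊n/2⌋, and suppose φ₁, …, φ_N (N = C(n,k−1)) form an eigenbasis of L_{k−1}(G) with eigenvalues λ₁, …, λ_N. Then B_{n,k,k−1}φ₁, …, B_{n,k,k−1}φ_N are linearly independent eigenvectors of L_k(G) with the same respective eigenvalues λ₁, …, λ_N. -/

import Mathlib

open Finset Matrix

/-- The `k`-th token graph of a graph `G` on `[n]` = `Fin n`: vertices are the `k`-subsets of
`[n]`, and `A, B` are adjacent iff `|A ∩ B| = k - 1` and `A △ B` is an edge of `G`. -/
def tokenGraph (n k : ℕ) (G : SimpleGraph (Fin n)) :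
    SimpleGraph {s : Finset (Fin n) // s.card = k} :=
  SimpleGraph.fromRel (fun A B =>
    (A.1 ∩ B.1).card = k - 1 ∧ ∃ u v, G.Adj u v ∧ symmDiff A.1 B.1 = {u, v})

noncomputable instance (n k : ℕ) (G : SimpleGraph (Fin n)) :
    DecidableRel (tokenGraph n k G).Adj := Classical.decRel _

/-- Laplacian matrix of the `k`-th token graph. -/
noncomputable def lapTok (n k : ℕ) (G : SimpleGraph (Fin n)) :
    Matrix {s : Finset (Fin n) // s.card = k} {s : Finset (Fin n) // s.card = k} ℝ :=
  SimpleGraph.lapMatrix ℝ (tokenGraph n k G)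

/-- The inclusion matrix `B_{n,k,l}` of `l`-subsets into `k`-subsets of `[n]`. -/
def inclMatrix (n k l : ℕ) :
    Matrix {s : Finset (Fin n) // s.card = k} {s : Finset (Fin n) // s.card = l} ℝ :=
  fun σ η => if η.1 ⊆ σ.1 then 1 else 0

/-!
For `u ≠ v` let `τ_uv` be the permutation of `k`-sets induced by the transposition `(u v)` of
`[n]`. Two `k`-sets are adjacent in `F_k(G)` exactly when one is the image of the other under
`τ_uv` for an edge `uv` of `G`, so `2 L_k(G) = ∑_{(u,v)} (I - τ_uv)`, the sum over ordered
adjacent pairs. Inclusion of sets is invariant under permutations of `[n]`, so `B = B_{n,k,l}`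
intertwines the `τ_uv` on the two levels, whence `L_k B = B L_l` and each `Bφᵢ` is an eigenvector
with eigenvalue `λᵢ`. For linear independence it suffices that `B = B_{n,k,k-1}` is injective:
`BᵀB = n I` when `k = 1`, and `BᵀB = CCᵀ + (n - 2k + 2) I` with `C = B_{n,k-1,k-2}` when `k ≥ 2`,
by counting the sets between `S ∩ T` and `S ∪ T`; so `BᵀB` is positive definite when `2k ≤ n`.
-/

section PermOnSets

variable {α : Type*}

def permOnSets (σ : Equiv.Perm α) (k : ℕ) : Equiv.Perm {s : Finset α // s.card = k} :=
  σ.finsetCongr.subtypeEquiv fun s => by simp [Equiv.finsetCongr_apply]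

@[simp]
lemma mem_permOnSets {σ : Equiv.Perm α} {k : ℕ} {A : {s : Finset α // s.card = k}} {x : α} :
    x ∈ (permOnSets σ k A).1 ↔ σ.symm x ∈ A.1 :=
  Finset.mem_map_equiv

lemma permOnSets_subset_permOnSets_iff {σ : Equiv.Perm α} {k l : ℕ}
    {A : {s : Finset α // s.card = k}} {S : {s : Finset α // s.card = l}} :
    (permOnSets σ l S).1 ⊆ (permOnSets σ k A).1 ↔ S.1 ⊆ A.1 :=
  Finset.map_subset_map

variable [DecidableEq α]

lemma permOnSets_swap_of_mem_iff {u v : α} {k : ℕ} {A : {s : Finset α // s.card = k}}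
    (h : u ∈ A.1 ↔ v ∈ A.1) : permOnSets (Equiv.swap u v) k A = A := by
  ext x
  simp only [mem_permOnSets, Equiv.symm_swap, Equiv.swap_apply_def]
  split_ifs <;> grind

lemma permOnSets_swap_injOn {u v u' v' : α} {k : ℕ} {A : {s : Finset α // s.card = k}}
    (hu : u ∈ A.1) (hv : v ∉ A.1) (hu' : u' ∈ A.1)
    (h : permOnSets (Equiv.swap u v) k A = permOnSets (Equiv.swap u' v') k A) :
    u = u' ∧ v = v' := by
  have hvmem := congrArg (v ∈ ·.1) h
  have humem := congrArg (u ∈ ·.1) h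
  simp only [mem_permOnSets, Equiv.symm_swap, Equiv.swap_apply_def] at hvmem humem
  constructor <;> split_ifs at hvmem humem <;> grind

lemma Finset.symmDiff_eq_pair_iff {s t : Finset α} (hst : s.card = t.card) {u v : α} :
    symmDiff s t = {u, v} ↔ (u ∈ s ↔ v ∉ s) ∧ t = s.map (Equiv.swap u v).toEmbedding := by
  constructor
  · intro h
    have hmem : ∀ x, (x ∈ s ↔ x ∉ t) ↔ x = u ∨ x = v := fun x => by
      have hx : x ∈ symmDiff s t ↔ x ∈ ({u, v} : Finset α) := by rw [h]
      simp only [Finset.mem_symmDiff, Finset.mem_insert, Finset.mem_singleton] at hx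
      tauto
    have huv : u ∈ s ↔ v ∉ s := by
      by_contra hsame
      by_cases hu : u ∈ s
      · obtain rfl : t = s := Finset.eq_of_subset_of_card_le (fun x hx => by grind) hst.le
        grind
      · obtain rfl : s = t := Finset.eq_of_subset_of_card_le (fun x hx => by grind) hst.ge
        grind
    refine ⟨huv, ?_⟩
    ext x
    simp only [Finset.mem_map_equiv, Equiv.symm_swap, Equiv.swap_apply_def]
    split_ifs <;> grind
  · rintro ⟨huv, rfl⟩
    ext x
    simp only [Finset.mem_symmDiff, Finset.mem_map_equiv, Equiv.symm_swap, Equiv.swap_apply_def,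
      Finset.mem_insert, Finset.mem_singleton]
    split_ifs <;> grind

end PermOnSets

section TokenGraph

variable {n k : ℕ} {G : SimpleGraph (Fin n)}

lemma tokenGraph_adj_iff {A B : {s : Finset (Fin n) // s.card = k}} :
    (tokenGraph n k G).Adj A B ↔
      ∃ u v, G.Adj u v ∧ u ∈ A.1 ∧ v ∉ A.1 ∧ B = permOnSets (Equiv.swap u v) k A := by
  have hcard : A.1.card = B.1.card := A.2.trans B.2.symm
  rw [tokenGraph, SimpleGraph.fromRel_adj]
  constructor
  · rintro ⟨-, h⟩
    obtain ⟨u, v, hadj, hsd⟩ : ∃ u v, G.Adj u v ∧ symmDiff A.1 B.1 = {u, v} := by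
      rcases h with ⟨-, h⟩ | ⟨-, u, v, hadj, hsd⟩
      · exact h
      · exact ⟨u, v, hadj, symmDiff_comm A.1 B.1 ▸ hsd⟩
    obtain ⟨huv, hB⟩ := (Finset.symmDiff_eq_pair_iff hcard).mp hsd
    by_cases hu : u ∈ A.1
    · exact ⟨u, v, hadj, hu, huv.mp hu, Subtype.ext hB⟩
    · refine ⟨v, u, hadj.symm, by tauto, hu, Subtype.ext ?_⟩
      rw [hB, Equiv.swap_comm]
      rfl
  · rintro ⟨u, v, hadj, hu, hv, rfl⟩
    have hinter : A.1 ∩ (permOnSets (Equiv.swap u v) k A).1 = A.1.erase u := by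
      ext x
      simp only [Finset.mem_inter, Finset.mem_erase, mem_permOnSets, Equiv.symm_swap,
        Equiv.swap_apply_def]
      split_ifs <;> grind
    refine ⟨fun h => ?_, Or.inl ⟨?_, u, v, hadj, ?_⟩⟩
    · have := congrArg (u ∈ ·.1) h
      simp [hu, hv] at this
    · rw [hinter, Finset.card_erase_of_mem hu, A.2]
    · exact (Finset.symmDiff_eq_pair_iff (A.2.trans (permOnSets _ k A).2.symm)).mpr ⟨by tauto, rfl⟩

end TokenGraph

section Laplacian

variable {n k : ℕ} {G : SimpleGraph (Fin n)} [DecidableRel G.Adj]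

lemma lapTok_mulVec_apply (y : {s : Finset (Fin n) // s.card = k} → ℝ)
    (A : {s : Finset (Fin n) // s.card = k}) :
    (lapTok n k G *ᵥ y) A = ∑ d : G.Dart with d.fst ∈ A.1 ∧ d.snd ∉ A.1,
      (y A - y (permOnSets (Equiv.swap d.fst d.snd) k A)) := by
  rw [lapTok, SimpleGraph.lapMatrix_mulVec_apply, ← SimpleGraph.card_neighborFinset_eq_degree,
    ← nsmul_eq_mul, ← Finset.sum_const, ← Finset.sum_sub_distrib]
  symm
  refine Finset.sum_nbij (fun d => permOnSets (Equiv.swap d.fst d.snd) k A) ?_ ?_ ?_ fun _ _ => rfl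
  · intro d hd
    simp only [Finset.mem_filter, Finset.mem_univ, true_and] at hd
    rw [SimpleGraph.mem_neighborFinset, tokenGraph_adj_iff]
    exact ⟨d.fst, d.snd, d.adj, hd.1, hd.2, rfl⟩
  · intro d hd d' hd' h
    rw [Finset.mem_coe, Finset.mem_filter] at hd hd'
    obtain ⟨h1, h2⟩ := permOnSets_swap_injOn hd.2.1 hd.2.2 hd'.2.1 h
    exact SimpleGraph.Dart.ext _ _ (Prod.ext h1 h2)
  · intro B hB
    rw [Finset.mem_coe, SimpleGraph.mem_neighborFinset, tokenGraph_adj_iff] at hB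
    obtain ⟨u, v, hadj, hu, hv, rfl⟩ := hB
    exact ⟨⟨(u, v), hadj⟩, by simp [hu, hv], rfl⟩

lemma two_smul_lapTok_mulVec (y : {s : Finset (Fin n) // s.card = k} → ℝ) :
    (2 : ℝ) • (lapTok n k G *ᵥ y) =
      ∑ d : G.Dart, (y - y ∘ permOnSets (Equiv.swap d.fst d.snd) k) := by
  ext A
  let g : G.Dart → ℝ := fun d =>
    if d.fst ∈ A.1 ∧ d.snd ∉ A.1 then y A - y (permOnSets (Equiv.swap d.fst d.snd) k A) else 0
  -- A dart with both or neither end in `A` fixes `A`; otherwise exactly one of `d`, `d.symm`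
  -- leaves `A`.
  have hg : ∀ d : G.Dart,
      y A - y (permOnSets (Equiv.swap d.fst d.snd) k A) = g d + g d.symm := by
    intro d
    by_cases hu : d.fst ∈ A.1 <;> by_cases hv : d.snd ∈ A.1 <;>
      simp [g, hu, hv, permOnSets_swap_of_mem_iff, Equiv.swap_comm]
  have hsymm : ∑ d : G.Dart, g d.symm = ∑ d : G.Dart, g d :=
    Equiv.sum_comp (Function.Involutive.toPerm _ SimpleGraph.Dart.symm_involutive) g
  simp only [Finset.sum_apply, Pi.sub_apply, Function.comp_apply]
  calc ((2 : ℝ) • (lapTok n k G *ᵥ y)) A = ∑ d : G.Dart, g d + ∑ d : G.Dart, g d.symm := by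
        rw [hsymm, Pi.smul_apply, lapTok_mulVec_apply, Finset.sum_filter, smul_eq_mul, two_mul]
    _ = _ := by rw [← Finset.sum_add_distrib]; exact Finset.sum_congr rfl fun d _ => (hg d).symm

end Laplacian

section Commutation

variable {n k l : ℕ}

lemma inclMatrix_mulVec_comp_permOnSets (σ : Equiv.Perm (Fin n))
    (x : {s : Finset (Fin n) // s.card = l} → ℝ) :
    inclMatrix n k l *ᵥ (x ∘ permOnSets σ l) = (inclMatrix n k l *ᵥ x) ∘ permOnSets σ k := by
  ext A
  simp only [Function.comp_apply, mulVec, dotProduct, inclMatrix, ite_mul, one_mul, zero_mul]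
  conv_rhs => rw [← Equiv.sum_comp (permOnSets σ l)]
  simp only [permOnSets_subset_permOnSets_iff]

theorem lapTok_mulVec_inclMatrix_mulVec (G : SimpleGraph (Fin n))
    (x : {s : Finset (Fin n) // s.card = l} → ℝ) :
    lapTok n k G *ᵥ (inclMatrix n k l *ᵥ x) = inclMatrix n k l *ᵥ (lapTok n l G *ᵥ x) := by
  classical
  apply smul_right_injective _ (two_ne_zero : (2 : ℝ) ≠ 0)
  calc (2 : ℝ) • (lapTok n k G *ᵥ (inclMatrix n k l *ᵥ x))
      = ∑ d : G.Dart, (inclMatrix n k l *ᵥ x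
          - (inclMatrix n k l *ᵥ x) ∘ permOnSets (Equiv.swap d.fst d.snd) k) :=
        two_smul_lapTok_mulVec _
    _ = inclMatrix n k l *ᵥ ∑ d : G.Dart, (x - x ∘ permOnSets (Equiv.swap d.fst d.snd) l) := by
        simp only [mulVec_sum, mulVec_sub, inclMatrix_mulVec_comp_permOnSets]
    _ = (2 : ℝ) • (inclMatrix n k l *ᵥ (lapTok n l G *ᵥ x)) := by
        rw [← two_smul_lapTok_mulVec, mulVec_smul]

end Commutation

section Counting

variable {α : Type*} [Fintype α] [DecidableEq α]

lemma card_filter_subset_eq_choose (t : Finset α) (m : ℕ) :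
    #{R : {s : Finset α // s.card = m} | R.1 ⊆ t} = t.card.choose m := by
  rw [← Finset.card_powersetCard]
  refine Finset.card_nbij (·.1) (fun R hR => ?_) Subtype.val_injective.injOn fun s hs => ?_
  · rw [Finset.mem_coe, Finset.mem_filter] at hR
    exact Finset.mem_powersetCard.mpr ⟨hR.2, R.2⟩
  · obtain ⟨hst, hcard⟩ := Finset.mem_powersetCard.mp hs
    exact ⟨⟨s, hcard⟩, by simpa using hst, rfl⟩

lemma card_filter_superset_eq_choose (s : Finset α) {k : ℕ} (hk : k ≤ Fintype.card α) :
    #{A : {t : Finset α // t.card = k} | s ⊆ A.1} =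
      (Fintype.card α - s.card).choose (Fintype.card α - k) := by
  rw [← Finset.card_compl, ← Finset.card_powersetCard]
  refine Finset.card_nbij (·.1ᶜ) (fun A hA => ?_) (compl_injective.comp Subtype.val_injective).injOn
    fun B hB => ?_
  · rw [Finset.mem_coe, Finset.mem_filter] at hA
    exact Finset.mem_powersetCard.mpr
      ⟨Finset.compl_subset_compl.mpr hA.2, by rw [Finset.card_compl, A.2]⟩
  · obtain ⟨hBs, hcard⟩ := Finset.mem_powersetCard.mp hB
    refine ⟨⟨Bᶜ, by rw [Finset.card_compl, hcard]; omega⟩, ?_, compl_compl B⟩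
    simpa using Finset.subset_compl_comm.mp hBs

end Counting

section Gram

variable {n k l m : ℕ}

lemma transpose_inclMatrix_mul_inclMatrix_apply (S T : {s : Finset (Fin n) // s.card = l}) :
    ((inclMatrix n k l)ᵀ * inclMatrix n k l) S T =
      #{A : {s : Finset (Fin n) // s.card = k} | S.1 ∪ T.1 ⊆ A.1} := by
  simp only [mul_apply, transpose_apply, inclMatrix, ite_zero_mul_ite_zero, mul_one,
    ← Finset.union_subset_iff, Finset.sum_boole]

lemma inclMatrix_mul_transpose_inclMatrix_apply (S T : {s : Finset (Fin n) // s.card = l}) :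
    (inclMatrix n l m * (inclMatrix n l m)ᵀ) S T =
      #{R : {s : Finset (Fin n) // s.card = m} | R.1 ⊆ S.1 ∩ T.1} := by
  simp only [mul_apply, transpose_apply, inclMatrix, ite_zero_mul_ite_zero, mul_one,
    ← Finset.subset_inter_iff, Finset.sum_boole]

lemma transpose_inclMatrix_mul_inclMatrix_eq_add (hmn : m + 2 ≤ n) :
    (inclMatrix n (m + 2) (m + 1))ᵀ * inclMatrix n (m + 2) (m + 1) =
      inclMatrix n (m + 1) m * (inclMatrix n (m + 1) m)ᵀ + ((n : ℝ) - 2 * (m + 1)) • 1 := by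
  ext S T
  rw [Matrix.add_apply, transpose_inclMatrix_mul_inclMatrix_apply,
    inclMatrix_mul_transpose_inclMatrix_apply, card_filter_subset_eq_choose,
    card_filter_superset_eq_choose _ (by simpa using hmn), Matrix.smul_apply, one_apply,
    Fintype.card_fin]
  by_cases hST : S = T
  · subst hST
    rw [Finset.union_self, Finset.inter_self, S.2, if_pos rfl,
      show n - (m + 1) = n - (m + 2) + 1 by omega, Nat.choose_succ_self_right,
      Nat.choose_succ_self_right]
    push_cast [Nat.cast_sub hmn]
    ring
  · have hsum := Finset.card_union_add_card_inter S.1 T.1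
    have hle : (S.1 ∪ T.1).card ≤ n := by simpa using Finset.card_le_univ (S.1 ∪ T.1)
    have hinter : (S.1 ∩ T.1).card ≤ m := by
      by_contra! h
      have hS := Finset.eq_of_subset_of_card_le (s := S.1 ∩ T.1) Finset.inter_subset_left
        (by rw [S.2]; omega)
      have hT := Finset.eq_of_subset_of_card_le (s := S.1 ∩ T.1) Finset.inter_subset_right
        (by rw [T.2]; omega)
      exact hST (Subtype.ext (hS.symm.trans hT))
    rw [S.2, T.2] at hsum
    rw [if_neg hST, smul_zero, add_zero]
    rcases hinter.eq_or_lt with h | h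
    · rw [h, show (S.1 ∪ T.1).card = m + 2 by omega]
      simp
    · rw [Nat.choose_eq_zero_of_lt h, Nat.choose_eq_zero_of_lt (by omega)]

end Gram

section Injectivity

lemma Matrix.mulVec_injective_of_posDef_transpose_mul_self {ι κ : Type*} [Fintype ι] [Fintype κ]
    [DecidableEq κ] {M : Matrix ι κ ℝ} (h : (Mᵀ * M).PosDef) : Function.Injective M.mulVec :=
  fun x y hxy => mulVec_injective_iff_isUnit.mpr h.isUnit (by simp only [← mulVec_mulVec, hxy])

variable {n k : ℕ}

lemma transpose_inclMatrix_mul_inclMatrix_one_zero (hn : 1 ≤ n) :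
    (inclMatrix n 1 0)ᵀ * inclMatrix n 1 0 = (n : ℝ) • 1 := by
  ext S T
  obtain rfl : S = T :=
    Subtype.ext ((Finset.card_eq_zero.mp S.2).trans (Finset.card_eq_zero.mp T.2).symm)
  rw [transpose_inclMatrix_mul_inclMatrix_apply, card_filter_superset_eq_choose _ (by simpa),
    Finset.union_self, S.2, Fintype.card_fin, Nat.sub_zero, Nat.choose_symm hn,
    Nat.choose_one_right, Matrix.smul_apply, one_apply_eq, smul_eq_mul, mul_one]

lemma posDef_transpose_inclMatrix_mul_inclMatrix (hk : 1 ≤ k) (hkn : 2 * k ≤ n) :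
    ((inclMatrix n k (k - 1))ᵀ * inclMatrix n k (k - 1)).PosDef := by
  obtain rfl | ⟨m, rfl⟩ : k = 1 ∨ ∃ m, k = m + 2 := by
    rcases hk.eq_or_lt with h | h
    · exact Or.inl h.symm
    · exact Or.inr ⟨k - 2, by omega⟩
  · rw [transpose_inclMatrix_mul_inclMatrix_one_zero (by omega)]
    exact PosDef.one.smul (by exact_mod_cast (by omega : 0 < n))
  · rw [show m + 2 - 1 = m + 1 from rfl, transpose_inclMatrix_mul_inclMatrix_eq_add (by omega)]
    refine PosDef.posSemidef_add ?_ (PosDef.one.smul ?_)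
    · simpa using posSemidef_self_mul_conjTranspose (inclMatrix n (m + 1) m)
    · have : (2 * (m + 2) : ℝ) ≤ n := by exact_mod_cast hkn
      linarith

end Injectivity

/-- If `φ₁, …, φ_N` (`N = C(n,k-1)`) form an eigenbasis of `L_{k-1}(G)` with eigenvalues
`λ₁, …, λ_N`, then `B_{n,k,k-1}φ₁, …, B_{n,k,k-1}φ_N` are linearly independent eigenvectors
of `L_k(G)` with the same respective eigenvalues. -/
theorem incl_eigenbasis (n k : ℕ) (G : SimpleGraph (Fin n)) (hk : 1 ≤ k) (hkn : k ≤ n / 2)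
    (φ : Fin (Nat.choose n (k - 1)) → ({s : Finset (Fin n) // s.card = k - 1} → ℝ))
    (lam : Fin (Nat.choose n (k - 1)) → ℝ)
    (hindep : LinearIndependent ℝ φ)
    (heig : ∀ i, lapTok n (k - 1) G *ᵥ φ i = lam i • φ i) :
    LinearIndependent ℝ (fun i => inclMatrix n k (k - 1) *ᵥ φ i) ∧
      ∀ i, lapTok n k G *ᵥ (inclMatrix n k (k - 1) *ᵥ φ i) =
        lam i • (inclMatrix n k (k - 1) *ᵥ φ i) := by
  have hinj : Function.Injective (inclMatrix n k (k - 1)).mulVec :=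
    mulVec_injective_of_posDef_transpose_mul_self
      (posDef_transpose_inclMatrix_mul_inclMatrix hk (by omega))
  refine ⟨hindep.map' (mulVecLin (inclMatrix n k (k - 1))) (LinearMap.ker_eq_bot.mpr hinj),
    fun i => ?_⟩
  rw [lapTok_mulVec_inclMatrix_mulVec, heig i, mulVec_smul]
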